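/- arXiv:2406.04923 — 3 statements merged into one kernel-verified Lean document; each statement's English description precedes it below -/
import Mathlib

section
/- If P_n is the path on n ≥ 1 vertices, then d(P_n) = ⌈n/2⌉. -/
open Finset in
/-- One stage of the deduction game.  The state is a pair `(P, F)` where `P` is the set of
protected vertices and `F` is the set of vertices whose initial searchers have already fired
(moved).  A vertex `v` is fireable if it is occupied, has not yet fired, and the number of
searchers on it (in the initial layout `L`) is at least its number of unprotected neighbours.
All fireable vertices fire simultaneously: one searcher moves to each unprotected neighbour,
which thereby becomes protected. -/
def dedStep {V : Type*} [Fintype V] [DecidableEq V] (G : SimpleGraph V) [DecidableRel G.Adj]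
    (L : V → ℕ) (s : Finset V × Finset V) : Finset V × Finset V :=
  let fire : Finset V := univ.filter (fun v =>
    0 < L v ∧ v ∉ s.2 ∧ (univ.filter (fun u => G.Adj v u ∧ u ∉ s.1)).card ≤ L v)
  (s.1 ∪ fire.biUnion (fun v => univ.filter (fun u => G.Adj v u ∧ u ∉ s.1)), s.2 ∪ fire)

open Finset in
/-- A layout `L` (assigning a number of searchers to each vertex) is successful if, starting
from the initially occupied vertices being protected and no vertex having fired, iterating the
deduction stages eventually protects every vertex. -/
def DedSuccessful {V : Type*} [Fintype V] [DecidableEq V] (G : SimpleGraph V)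
    [DecidableRel G.Adj] (L : V → ℕ) : Prop :=
  ∃ k : ℕ, ((dedStep G L)^[k] (univ.filter (fun v => 0 < L v), ∅)).1 = univ

/-- The deduction number of `G`: the minimum number of searchers in a successful layout. -/
noncomputable def deductionNumber {V : Type*} [Fintype V] (G : SimpleGraph V) : ℕ :=
  letI := Classical.decEq V
  letI := Classical.decRel G.Adj
  sInf {n | ∃ L : V → ℕ, (∑ v, L v) = n ∧ DedSuccessful G L}

open Finset

section Aux

variable {V : Type*} [Fintype V] [DecidableEq V] (G : SimpleGraph V) [DecidableRel G.Adj]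
  (L : V → ℕ)

lemma dedStep_fst_subset (s : Finset V × Finset V) : s.1 ⊆ (dedStep G L s).1 := by
  simp only [dedStep]
  exact subset_union_left

lemma dedIter_fst_mono {a b : ℕ} (hab : a ≤ b) (s : Finset V × Finset V) :
    ((dedStep G L)^[a] s).1 ⊆ ((dedStep G L)^[b] s).1 := by
  induction b with
  | zero => simpa [Nat.le_zero.mp hab]
  | succ b ih =>
    rcases Nat.lt_or_ge a (b+1) with h | h
    · rw [Function.iterate_succ_apply']
      exact (ih (by omega)).trans (dedStep_fst_subset G L _)
    · have : a = b + 1 := le_antisymm hab h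
      subst this; rfl

/-- If a vertex has fired, then all its neighbours are protected. -/
lemma dedIter_fired_nbrs (k : ℕ) (v : V)
    (hv : v ∈ ((dedStep G L)^[k] (univ.filter (fun v => 0 < L v), ∅)).2)
    (u : V) (hadj : G.Adj v u) :
    u ∈ ((dedStep G L)^[k] (univ.filter (fun v => 0 < L v), ∅)).1 := by
  induction k with
  | zero => simp at hv
  | succ k ih =>
    rw [Function.iterate_succ_apply'] at hv ⊢
    set s := (dedStep G L)^[k] (univ.filter (fun v => 0 < L v), ∅) with hs
    simp only [dedStep, mem_union] at hv ⊢
    rcases hv with hv | hv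
    · exact Or.inl (ih hv)
    · by_cases hu : u ∈ s.1
      · exact Or.inl hu
      · refine Or.inr (mem_biUnion.mpr ⟨v, hv, ?_⟩)
        simp [hadj, hu]

/-- The counting invariant for the lower bound. -/
lemma dedIter_card_le (k : ℕ) :
    ((dedStep G L)^[k] (univ.filter (fun v => 0 < L v), ∅)).1.card ≤
      (univ.filter (fun v => 0 < L v)).card +
        ∑ v ∈ ((dedStep G L)^[k] (univ.filter (fun v => 0 < L v), ∅)).2, L v := by
  induction k with
  | zero => simp
  | succ k ih =>
    rw [Function.iterate_succ_apply']
    set s := (dedStep G L)^[k] (univ.filter (fun v => 0 < L v), ∅) with hs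
    simp only [dedStep]
    set fire : Finset V := univ.filter (fun v =>
      0 < L v ∧ v ∉ s.2 ∧ (univ.filter (fun u => G.Adj v u ∧ u ∉ s.1)).card ≤ L v) with hfire
    have hdisj : Disjoint s.2 fire := by
      rw [disjoint_right]
      intro v hv
      simp only [hfire, mem_filter] at hv
      exact fun h => hv.2.2.1 h
    rw [sum_union hdisj]
    have h1 : (s.1 ∪ fire.biUnion (fun v => univ.filter (fun u => G.Adj v u ∧ u ∉ s.1))).card ≤
        s.1.card + ∑ v ∈ fire, L v := by
      refine (card_union_le _ _).trans ?_
      gcongr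
      refine (card_biUnion_le).trans ?_
      refine sum_le_sum ?_
      intro v hv
      simp only [hfire, mem_filter] at hv
      exact hv.2.2.2
    omega

lemma occupied_card_le : (univ.filter (fun v => 0 < L v)).card ≤ ∑ v, L v := by
  calc (univ.filter (fun v => 0 < L v)).card
      = ∑ v ∈ univ.filter (fun v => 0 < L v), 1 := by simp
    _ ≤ ∑ v ∈ univ.filter (fun v => 0 < L v), L v := sum_le_sum (fun v hv => by
        simp only [mem_filter] at hv; omega)
    _ ≤ ∑ v, L v := sum_le_sum_of_subset (filter_subset _ _)

/-- Lower bound: a successful layout needs at least `⌈n/2⌉` searchers. -/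
lemma ded_lower (hL : DedSuccessful G L) : Fintype.card V ≤ 2 * ∑ v, L v := by
  obtain ⟨k, hk⟩ := hL
  have h1 := dedIter_card_le G L k
  rw [hk] at h1
  have h2 : ∑ v ∈ ((dedStep G L)^[k] (univ.filter (fun v => 0 < L v), ∅)).2, L v ≤
      ∑ v, L v := sum_le_sum_of_subset (subset_univ _)
  have h3 := occupied_card_le L
  have h4 : (univ : Finset V).card = Fintype.card V := rfl
  omega

end Aux

section Path

variable {n : ℕ} [DecidableEq (Fin n)] [DecidableRel (SimpleGraph.pathGraph n).Adj]

/-- The layout with one searcher on each even vertex. -/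
def evenL (n : ℕ) : Fin n → ℕ := fun v => if v.val % 2 = 0 then 1 else 0

lemma evenL_sum (n : ℕ) : ∑ v, evenL n v = (n + 1) / 2 := by
  induction n with
  | zero => simp
  | succ n ih =>
    rw [Fin.sum_univ_castSucc]
    simp only [evenL, Fin.coe_castSucc, Fin.val_last] at ih ⊢
    rw [ih]
    by_cases h : n % 2 = 0 <;> simp [h] <;> omega

lemma evenL_cascade_step (j : ℕ) (u : Fin n) (hu : u.val = 2 * j + 1)
    (hprev : ∀ w : Fin n, w.val + 2 = u.val →
      w ∈ ((dedStep (SimpleGraph.pathGraph n) (evenL n))^[j]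
        (univ.filter (fun v => 0 < evenL n v), ∅)).1) :
    u ∈ ((dedStep (SimpleGraph.pathGraph n) (evenL n))^[j + 1]
      (univ.filter (fun v => 0 < evenL n v), ∅)).1 := by
  set s := (dedStep (SimpleGraph.pathGraph n) (evenL n))^[j]
      (univ.filter (fun v => 0 < evenL n v), ∅) with hs
  have hun : u.val < n := u.isLt
  have hv2 : 2 * j < n := by omega
  set v : Fin n := ⟨2 * j, hv2⟩ with hvdef
  have hadj : (SimpleGraph.pathGraph n).Adj v u := by
    rw [SimpleGraph.pathGraph_adj]
    left; simp [hvdef, hu]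
  rw [Function.iterate_succ_apply', ← hs]
  simp only [dedStep, mem_union]
  by_cases hvF : v ∈ s.2
  · exact Or.inl (dedIter_fired_nbrs _ _ j v hvF u hadj)
  · by_cases huP : u ∈ s.1
    · exact Or.inl huP
    · refine Or.inr (mem_biUnion.mpr ⟨v, ?_, ?_⟩)
      · rw [mem_filter]
        refine ⟨mem_univ _, ?_, hvF, ?_⟩
        · simp [evenL, hvdef]
        · have hsub : (univ.filter (fun w =>
              (SimpleGraph.pathGraph n).Adj v w ∧ w ∉ s.1)) ⊆ {u} := by
            intro w hw
            rw [mem_filter] at hw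
            obtain ⟨-, hadjw, hwP⟩ := hw
            rw [SimpleGraph.pathGraph_adj] at hadjw
            rcases hadjw with h | h
            · have : w = u := Fin.ext (by simp [hvdef] at h; omega)
              simp [this]
            · exfalso
              exact hwP (hprev w (by simp [hvdef] at h; omega))
          have := card_le_card hsub
          simp only [card_singleton] at this
          have hLv : evenL n v = 1 := by simp [evenL, hvdef]
          omega
      · simp [hadj, huP]

lemma evenL_cascade (j : ℕ) (u : Fin n) (hu : u.val = 2 * j + 1) :
    u ∈ ((dedStep (SimpleGraph.pathGraph n) (evenL n))^[j + 1]
      (univ.filter (fun v => 0 < evenL n v), ∅)).1 := by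
  induction j generalizing u with
  | zero =>
    exact evenL_cascade_step 0 u hu (fun w hw => by exfalso; omega)
  | succ j ih =>
    refine evenL_cascade_step (j + 1) u hu (fun w hw => ?_)
    exact ih w (by omega)

lemma evenL_successful (hn : 1 ≤ n) :
    DedSuccessful (SimpleGraph.pathGraph n) (evenL n) := by
  refine ⟨n, eq_univ_of_forall fun u => ?_⟩
  rcases Nat.even_or_odd u.val with h | h
  · refine dedIter_fst_mono _ _ (Nat.zero_le n) _ ?_
    simp only [Function.iterate_zero, id_eq, mem_filter]
    have hm : u.val % 2 = 0 := by obtain ⟨m, hm⟩ := h; omega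
    exact ⟨mem_univ _, by simp [evenL, hm]⟩
  · obtain ⟨j, hj⟩ := h
    have hjn : j + 1 ≤ n := by have := u.isLt; omega
    exact dedIter_fst_mono _ _ hjn _ (evenL_cascade j u hj)

end Path

set_option maxHeartbeats 1600000 in
theorem deduction_pathGraph (n : ℕ) (hn : 1 ≤ n) :
    deductionNumber (SimpleGraph.pathGraph n) = (n + 1) / 2 := by
  unfold deductionNumber
  have hmem : (n + 1) / 2 ∈ {m | ∃ L : Fin n → ℕ,
      letI := Classical.decEq (Fin n)
      letI := Classical.decRel (SimpleGraph.pathGraph n).Adj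
      (∑ v, L v) = m ∧ DedSuccessful (SimpleGraph.pathGraph n) L} := by
    letI := Classical.decEq (Fin n)
    letI := Classical.decRel (SimpleGraph.pathGraph n).Adj
    exact ⟨evenL n, evenL_sum n, evenL_successful hn⟩
  refine le_antisymm (Nat.sInf_le hmem) ?_
  refine le_csInf ⟨_, hmem⟩ ?_
  letI := Classical.decEq (Fin n)
  letI := Classical.decRel (SimpleGraph.pathGraph n).Adj
  rintro m hm2
  obtain ⟨L, hsum, hL⟩ := hm2
  have hlow := ded_lower (SimpleGraph.pathGraph n) L hL
  simp only [Fintype.card_fin] at hlow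
  omega
end

section
/- If W_n is the wheel on n ≥ 5 vertices (a cycle on n−1 vertices plus a universal hub vertex), then d(W_n) = ⌈n/2⌉. -/
/-- The wheel on `n` vertices: a cycle on `n - 1` vertices together with a universal
hub vertex. -/
def wheelGraph (n : ℕ) : SimpleGraph (Unit ⊕ Fin (n - 1)) :=
  SimpleGraph.fromRel (fun a b => match a, b with
    | Sum.inl _, Sum.inr _ => True
    | Sum.inr i, Sum.inr j => (SimpleGraph.cycleGraph (n - 1)).Adj i j
    | _, _ => False)


/-!
A searcher that moves protects exactly one new vertex, so at most `2 · ∑ L` vertices are ever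
protected, which gives `⌈n/2⌉ ≤ d(G)` for every graph.

For the wheel, number the rim `0, …, m - 1` with `m = n - 1` and put searchers on the pairs
`4k + 1, 4k + 2` for `k < ⌊m/4⌋` and on the hub. As the hub is protected, each pair vertex has a
single unprotected neighbour, so at stage one the pairs protect the rim vertices below `4⌊m/4⌋`.
The at most three rim vertices left over are protected by the hub, which gets a second searcher
when two are left; when three are left, one more searcher on the last rim vertex protects its
rim neighbour at stage two and the hub protects the remaining vertex at stage three. This uses
`⌊m/2⌋ + 1 = ⌈n/2⌉` searchers.
-/

open Finset SimpleGraph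

section Deduction

variable {V : Type*} [Fintype V] [DecidableEq V] (G : SimpleGraph V) [DecidableRel G.Adj]
  (L : V → ℕ)

def dedState (k : ℕ) : Finset V × Finset V :=
  (dedStep G L)^[k] (univ.filter (fun v => 0 < L v), ∅)

variable {G L}

theorem dedState_succ (k : ℕ) : dedState G L (k + 1) = dedStep G L (dedState G L k) :=
  Function.iterate_succ_apply' _ _ _

theorem mem_dedState_zero_fst {v : V} (hv : 0 < L v) : v ∈ (dedState G L 0).1 := by
  simpa [dedState] using hv

theorem dedState_fst_mono : Monotone fun k => (dedState G L k).1 :=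
  monotone_nat_of_le_succ fun k => by
    rw [dedState_succ]
    exact subset_union_left

theorem adj_mem_dedState_fst_of_mem_snd {k : ℕ} {v u : V} (hv : v ∈ (dedState G L k).2)
    (hu : G.Adj v u) : u ∈ (dedState G L k).1 := by
  induction k with
  | zero => simp [dedState] at hv
  | succ k ih =>
    rw [dedState_succ] at hv ⊢
    simp only [dedStep, mem_union, mem_biUnion, mem_filter, mem_univ, true_and] at hv ⊢
    by_cases hp : u ∈ (dedState G L k).1
    · exact Or.inl hp
    · rcases hv with hv | hv
      · exact Or.inl (ih hv)
      · exact Or.inr ⟨v, hv, hu, hp⟩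

/-- Either `v` fires at stage `k`, or it has fired before and all its neighbours are protected
already. -/
theorem adj_mem_dedState_succ_fst {k : ℕ} {v u : V} (hv : 0 < L v) (T : Finset V)
    (hT : #T ≤ L v) (hN : ∀ w, G.Adj v w → w ∈ (dedState G L k).1 ∨ w ∈ T) (hu : G.Adj v u) :
    u ∈ (dedState G L (k + 1)).1 := by
  by_cases hfired : v ∈ (dedState G L k).2
  · exact dedState_fst_mono k.le_succ (adj_mem_dedState_fst_of_mem_snd hfired hu)
  by_cases hp : u ∈ (dedState G L k).1
  · exact dedState_fst_mono k.le_succ hp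
  have hcard : #(univ.filter fun w => G.Adj v w ∧ w ∉ (dedState G L k).1) ≤ L v := by
    refine (card_le_card fun w hw => ?_).trans hT
    simp only [mem_filter, mem_univ, true_and] at hw
    exact (hN w hw.1).resolve_left hw.2
  rw [dedState_succ]
  simp only [dedStep, mem_union, mem_biUnion, mem_filter, mem_univ, true_and]
  exact Or.inr ⟨v, ⟨hv, hfired, hcard⟩, hu, hp⟩

theorem card_dedState_fst_le (k : ℕ) :
    #(dedState G L k).1 ≤ #(univ.filter fun v => 0 < L v) + ∑ v ∈ (dedState G L k).2, L v := by
  induction k with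
  | zero => simp [dedState]
  | succ k ih =>
    rw [dedState_succ]
    set s := dedState G L k
    set fire := univ.filter fun v =>
      0 < L v ∧ v ∉ s.2 ∧ #(univ.filter fun u => G.Adj v u ∧ u ∉ s.1) ≤ L v
    have hdisj : Disjoint s.2 fire := disjoint_right.2 fun v hv => (mem_filter.1 hv).2.2.1
    calc #(s.1 ∪ fire.biUnion fun v => univ.filter fun u => G.Adj v u ∧ u ∉ s.1)
        ≤ #s.1 + ∑ v ∈ fire, L v :=
          (card_union_le _ _).trans (Nat.add_le_add_left (card_biUnion_le.trans
            (sum_le_sum fun v hv => (mem_filter.1 hv).2.2.2)) _)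
      _ ≤ #(univ.filter fun v => 0 < L v) + ∑ v ∈ s.2 ∪ fire, L v := by
          rw [sum_union hdisj]; omega

theorem DedSuccessful.card_le_two_mul_sum (h : DedSuccessful G L) :
    Fintype.card V ≤ 2 * ∑ v, L v := by
  obtain ⟨k, hk⟩ := h
  have hprotected := card_dedState_fst_le (G := G) (L := L) k
  rw [dedState, hk, card_univ] at hprotected
  have hoccupied : #(univ.filter fun v => 0 < L v) ≤ ∑ v, L v :=
    calc #(univ.filter fun v => 0 < L v) = ∑ v ∈ univ.filter (fun v => 0 < L v), 1 :=
          card_eq_sum_ones _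
      _ ≤ ∑ v ∈ univ.filter (fun v => 0 < L v), L v := sum_le_sum fun v hv => (mem_filter.1 hv).2
      _ ≤ ∑ v, L v := sum_le_sum_of_subset (subset_univ _)
  have hfired : ∑ v ∈ (dedState G L k).2, L v ≤ ∑ v, L v := sum_le_sum_of_subset (subset_univ _)
  rw [dedState] at hfired
  omega

theorem dedSuccessful_one : DedSuccessful G 1 := ⟨0, by simp⟩

theorem deductionNumber_le (h : DedSuccessful G L) : deductionNumber G ≤ ∑ v, L v :=
  Nat.sInf_le ⟨L, rfl, by convert h⟩

end Deduction

theorem card_le_two_mul_deductionNumber {V : Type*} [Fintype V] (G : SimpleGraph V) :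
    Fintype.card V ≤ 2 * deductionNumber G := by
  let _ := Classical.decEq V
  let _ := Classical.decRel G.Adj
  obtain ⟨L, hL, hsucc⟩ : deductionNumber G ∈ {n | ∃ L : V → ℕ, (∑ v, L v) = n ∧
      DedSuccessful G L} := Nat.sInf_mem ⟨_, 1, rfl, dedSuccessful_one⟩
  exact hL ▸ hsucc.card_le_two_mul_sum

theorem SimpleGraph.cycleGraph_adj_iff_val {m : ℕ} (hm : 2 ≤ m) {i j : Fin m} :
    (cycleGraph m).Adj i j ↔ i.val + 1 = j.val ∨ j.val + 1 = i.val ∨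
      (i.val = 0 ∧ j.val + 1 = m) ∨ (j.val = 0 ∧ i.val + 1 = m) := by
  have hsub (a b : Fin m) :
      (a - b).val = 1 ↔ b.val + 1 = a.val ∨ (a.val = 0 ∧ b.val + 1 = m) := by
    have ha := a.isLt
    have hb := b.isLt
    rw [Fin.sub_def]
    dsimp only
    rcases lt_or_ge (m - b.val + a.val) m with h | h
    · rw [Nat.mod_eq_of_lt h]; omega
    · rw [Nat.mod_eq_sub_mod h, Nat.mod_eq_of_lt (show m - b.val + a.val - m < m by omega)]
      omega
  rw [cycleGraph_adj', hsub, hsub]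
  omega

theorem Finset.sum_range_four_mul_boole_mod_four (K : ℕ) :
    ∑ j ∈ range (4 * K), (if j % 4 = 1 ∨ j % 4 = 2 then 1 else 0) = 2 * K := by
  induction K with
  | zero => simp
  | succ K ih =>
    rw [show 4 * (K + 1) = 4 * K + 1 + 1 + 1 + 1 by ring]
    simp only [sum_range_succ, ih]
    split_ifs <;> omega

namespace wheelGraph

variable {n : ℕ}

theorem adj_inl_inr (u : Unit) (j : Fin (n - 1)) : (wheelGraph n).Adj (.inl u) (.inr j) := by
  simp [wheelGraph]

theorem adj_inr_inr {i j : Fin (n - 1)} :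
    (wheelGraph n).Adj (.inr i) (.inr j) ↔ (cycleGraph (n - 1)).Adj i j := by
  simp only [wheelGraph, fromRel_adj, ne_eq, Sum.inr.injEq]
  constructor
  · rintro ⟨-, h | h⟩
    exacts [h, h.symm]
  · intro h
    exact ⟨h.ne, Or.inl h⟩

variable [DecidableRel (wheelGraph n).Adj]

theorem inr_mem_dedState_succ_of_adj {L : Unit ⊕ Fin (n - 1) → ℕ} {k : ℕ} {v i : Fin (n - 1)}
    (hv : 0 < L (Sum.inr v)) (hhub : Sum.inl () ∈ (dedState (wheelGraph n) L k).1)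
    (w : Fin (n - 1))
    (hw : ∀ i', (cycleGraph (n - 1)).Adj v i' → i' ≠ w →
      Sum.inr i' ∈ (dedState (wheelGraph n) L k).1)
    (hi : (cycleGraph (n - 1)).Adj v i) : Sum.inr i ∈ (dedState (wheelGraph n) L (k + 1)).1 := by
  refine adj_mem_dedState_succ_fst hv {.inr w} (by rwa [card_singleton]) ?_ (adj_inr_inr.2 hi)
  rintro (_ | i') hi'
  · exact Or.inl hhub
  · by_cases h : i' = w
    · simp [h]
    · exact Or.inl (hw i' (adj_inr_inr.1 hi') h)

theorem inr_mem_dedState_succ_of_hub {L : Unit ⊕ Fin (n - 1) → ℕ} {k : ℕ}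
    (hhub : 0 < L (Sum.inl ())) (T : Finset (Fin (n - 1))) (hT : #T ≤ L (Sum.inl ()))
    (hw : ∀ i ∉ T, Sum.inr i ∈ (dedState (wheelGraph n) L k).1) (i : Fin (n - 1)) :
    Sum.inr i ∈ (dedState (wheelGraph n) L (k + 1)).1 := by
  refine adj_mem_dedState_succ_fst hhub (T.map .inr) (by rwa [card_map]) ?_ (adj_inl_inr () i)
  rintro (⟨⟩ | i') hi'
  · exact (hi'.ne rfl).elim
  · by_cases h : i' ∈ T
    · exact Or.inr (mem_map_of_mem _ h)
    · exact Or.inl (hw i' h)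

end wheelGraph

def wheelLayout (n : ℕ) : Unit ⊕ Fin (n - 1) → ℕ :=
  Sum.elim (fun _ => if (n - 1) % 4 = 2 then 2 else 1)
    fun j => (if j.val < 4 * ((n - 1) / 4) ∧ (j.val % 4 = 1 ∨ j.val % 4 = 2) then 1 else 0) +
      if (n - 1) % 4 = 3 ∧ j.val = n - 2 then 1 else 0

namespace wheelLayout

variable {n : ℕ}

theorem inl_pos : 0 < wheelLayout n (Sum.inl ()) := by
  simp only [wheelLayout, Sum.elim_inl]
  split_ifs <;> omega

theorem inr_pos_iff {j : Fin (n - 1)} :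
    0 < wheelLayout n (Sum.inr j) ↔ (j.val < 4 * ((n - 1) / 4) ∧ (j.val % 4 = 1 ∨ j.val % 4 = 2)) ∨
      ((n - 1) % 4 = 3 ∧ j.val = n - 2) := by
  simp only [wheelLayout, Sum.elim_inr]
  split_ifs <;> simp_all

theorem sum_eq (hn : 0 < n) : ∑ v, wheelLayout n v = (n + 1) / 2 := by
  have hK : 4 * ((n - 1) / 4) ≤ n - 1 := Nat.mul_div_le _ _
  have hpairs : ∑ j ∈ range (n - 1),
      (if j < 4 * ((n - 1) / 4) ∧ (j % 4 = 1 ∨ j % 4 = 2) then 1 else 0) = 2 * ((n - 1) / 4) := by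
    rw [← sum_range_four_mul_boole_mod_four, ← sum_subset (range_subset_range.2 hK)]
    · exact sum_congr rfl fun j hj => by simp [mem_range.1 hj]
    · intro j _ hj
      simp_all
  have hextra : ∑ j ∈ range (n - 1), (if (n - 1) % 4 = 3 ∧ j = n - 2 then 1 else 0) =
      if (n - 1) % 4 = 3 then 1 else 0 := by
    split_ifs with h
    · simp only [h, true_and, sum_ite_eq', mem_range, ite_eq_left_iff]
      omega
    · simp [h]
  simp only [wheelLayout, Fintype.sum_sum_type, Sum.elim_inl, Sum.elim_inr, univ_unique,
    sum_singleton]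
  rw [Fin.sum_univ_eq_sum_range (fun j =>
      (if j < 4 * ((n - 1) / 4) ∧ (j % 4 = 1 ∨ j % 4 = 2) then 1 else 0) +
        if (n - 1) % 4 = 3 ∧ j = n - 2 then 1 else 0), sum_add_distrib, hpairs, hextra]
  split_ifs <;> omega

variable [DecidableRel (wheelGraph n).Adj]

theorem inl_mem_dedState_zero : Sum.inl () ∈ (dedState (wheelGraph n) (wheelLayout n) 0).1 :=
  mem_dedState_zero_fst inl_pos

theorem inr_mem_dedState_one (hn : 5 ≤ n) {j : Fin (n - 1)}
    (hj : j.val < 4 * ((n - 1) / 4) ∨ ((n - 1) % 4 = 3 ∧ j.val = n - 2)) :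
    Sum.inr j ∈ (dedState (wheelGraph n) (wheelLayout n) 1).1 := by
  have hcyc (i j : Fin (n - 1)) := cycleGraph_adj_iff_val (i := i) (j := j) (by omega)
  by_cases hocc : 0 < wheelLayout n (Sum.inr j)
  · exact dedState_fst_mono zero_le_one (mem_dedState_zero_fst hocc)
  rw [inr_pos_iff] at hocc
  obtain ⟨v, hv⟩ : ∃ v : Fin (n - 1), v.val = if j.val % 4 = 0 then j.val + 1 else j.val - 1 :=
    ⟨⟨if j.val % 4 = 0 then j.val + 1 else j.val - 1, by split_ifs <;> omega⟩, rfl⟩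
  refine wheelGraph.inr_mem_dedState_succ_of_adj (v := v) (w := j)
    (inr_pos_iff.2 (by split_ifs at hv <;> omega)) inl_mem_dedState_zero ?_
    ((hcyc _ _).2 (by split_ifs at hv <;> omega))
  intro i hi hij
  have hij' := Fin.val_ne_iff.2 hij
  rw [hcyc] at hi
  exact mem_dedState_zero_fst (inr_pos_iff.2 (by split_ifs at hv <;> omega))

theorem inr_mem_dedState_two (hn : 5 ≤ n) {j : Fin (n - 1)}
    (hj : j.val < 4 * ((n - 1) / 4) ∨ ((n - 1) % 4 = 3 ∧ n - 3 ≤ j.val)) :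
    Sum.inr j ∈ (dedState (wheelGraph n) (wheelLayout n) 2).1 := by
  have hcyc (i j : Fin (n - 1)) := cycleGraph_adj_iff_val (i := i) (j := j) (by omega)
  by_cases h1 : j.val < 4 * ((n - 1) / 4) ∨ ((n - 1) % 4 = 3 ∧ j.val = n - 2)
  · exact dedState_fst_mono one_le_two (inr_mem_dedState_one hn h1)
  refine wheelGraph.inr_mem_dedState_succ_of_adj (v := ⟨n - 2, by omega⟩) (w := j)
    (inr_pos_iff.2 (Or.inr ⟨by omega, rfl⟩))
    (dedState_fst_mono zero_le_one inl_mem_dedState_zero) ?_ ((hcyc _ _).2 (by dsimp only; omega))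
  intro i hi hij
  have hij' := Fin.val_ne_iff.2 hij
  rw [hcyc] at hi
  exact inr_mem_dedState_one hn (by simp only at hi; omega)

theorem dedState_three_fst_eq_univ (hn : 5 ≤ n) :
    (dedState (wheelGraph n) (wheelLayout n) 3).1 = univ := by
  refine eq_univ_of_forall fun
    | .inl () => dedState_fst_mono (by norm_num) inl_mem_dedState_zero
    | .inr i => ?_
  let T := univ.filter fun i : Fin (n - 1) =>
    ¬(i.val < 4 * ((n - 1) / 4) ∨ ((n - 1) % 4 = 3 ∧ n - 3 ≤ i.val))
  have hT : #T ≤ wheelLayout n (Sum.inl ()) := by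
    simp only [wheelLayout, Sum.elim_inl]
    split_ifs with hr
    · refine (card_le_card fun i hi => ?_).trans
        (card_le_two (a := (⟨n - 3, by omega⟩ : Fin (n - 1))) (b := ⟨n - 2, by omega⟩))
      simp only [T, mem_filter, mem_univ, true_and] at hi
      simp only [mem_insert, mem_singleton, Fin.ext_iff]
      omega
    · refine card_le_one.2 fun a ha b hb => ?_
      simp only [T, mem_filter, mem_univ, true_and] at ha hb
      ext
      omega
  exact wheelGraph.inr_mem_dedState_succ_of_hub inl_pos T hT
    (fun i hi => inr_mem_dedState_two hn (not_not.1 fun h => hi (mem_filter.2 ⟨mem_univ _, h⟩))) i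

theorem dedSuccessful (hn : 5 ≤ n) : DedSuccessful (wheelGraph n) (wheelLayout n) :=
  ⟨3, dedState_three_fst_eq_univ hn⟩

end wheelLayout

theorem deduction_wheelGraph (n : ℕ) (hn : 5 ≤ n) :
    deductionNumber (wheelGraph n) = (n + 1) / 2 := by
  classical
  have hcard : Fintype.card (Unit ⊕ Fin (n - 1)) = n := by
    rw [Fintype.card_sum, Fintype.card_unit, Fintype.card_fin]
    omega
  have hupper : deductionNumber (wheelGraph n) ≤ (n + 1) / 2 :=
    (deductionNumber_le (wheelLayout.dedSuccessful hn)).trans_eq (wheelLayout.sum_eq (by omega))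
  have hlower := card_le_two_mul_deductionNumber (wheelGraph n)
  omega
end

section
/- For every tree T, the pruning number equals the deduction number: p(T) = d(T). -/
open Classical in
/-- The number of searchers placed by one round of the pruning algorithm on the induced
subgraph of `G` on `S`: one searcher for each connected component with at most two
vertices, and one searcher on each leaf of every larger component. -/
noncomputable def pruneStepCount {V : Type*} [Fintype V] (G : SimpleGraph V)
    (S : Finset V) : ℕ :=
  letI : Fintype (G.induce (S : Set V)).ConnectedComponent := Fintype.ofFinite _
  ∑ c : (G.induce (S : Set V)).ConnectedComponent,
    if c.supp.ncard ≤ 2 then 1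
    else {v ∈ c.supp | {u | (G.induce (S : Set V)).Adj v u}.ncard = 1}.ncard

open Classical in
/-- The vertices deleted by one round of the pruning algorithm on the induced subgraph of
`G` on `S`: isolated vertices and leaves (degree at most one) together with stems
(vertices adjacent to a leaf). -/
noncomputable def pruneRemoved {V : Type*} [Fintype V] (G : SimpleGraph V)
    (S : Finset V) : Finset V :=
  S.filter (fun v => {u ∈ (S : Set V) | G.Adj v u}.ncard ≤ 1 ∨
    ∃ u ∈ S, G.Adj v u ∧ {w ∈ (S : Set V) | G.Adj u w}.ncard = 1)

/-- Running the pruning algorithm for a given number of rounds. -/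
noncomputable def pruneRun {V : Type*} [Fintype V] [DecidableEq V] (G : SimpleGraph V) :
    ℕ → Finset V → ℕ
  | 0, _ => 0
  | fuel + 1, S =>
    if S = ∅ then 0 else pruneStepCount G S + pruneRun G fuel (S \ pruneRemoved G S)

/-- The pruning number of `G`: the total number of searchers placed by the pruning
algorithm.  (On a tree, each round deletes at least one vertex, so `Fintype.card V`
rounds always suffice for the algorithm to terminate.) -/
noncomputable def pruningNumber {V : Type*} [Fintype V] [DecidableEq V]
    (G : SimpleGraph V) : ℕ :=
  pruneRun G (Fintype.card V) Finset.univ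


/-!
Pruning and the deduction game satisfy the same recursion. Let `d(S)` be the deduction number of
the subgraph induced by `S`, `R ⊆ S` the vertices deleted by one round of pruning, and `p₁(S)` the
number of searchers placed in that round. Then `d(S) = p₁(S) + d(S \ R)` for every graph.

For `≤`, add the searchers of the round to an optimal layout on `S \ R`: in the first stage the
placed leaves (and the chosen vertex of each component with at most two vertices) fire and protect
all of `R`, and from then on the game on `S` stays ahead of the game on `S \ R`.

For `≥`, move a successful layout on `S` into `S \ R`: each survivor keeps its searchers and gets
one more for every deleted stem that fires onto it, so the game on `S \ R` stays ahead of the game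
on `S`. A stem fires once, onto at most as many vertices as it has searchers, and a leaf without
searchers can only be protected by its stem. So in a component with at least three vertices the
survivors gain at most (searchers on leaves and stems) − (number of leaves). Every smaller component
needs at least one searcher.

In an acyclic graph one end of a longest path has degree at most one, so every round deletes a
vertex and the recursion gives the pruning number.
-/

open Finset

namespace SimpleGraph

theorem IsAcyclic.exists_subsingleton_neighborSet {V : Type*} [Finite V] [Nonempty V]
    {G : SimpleGraph V} (hG : G.IsAcyclic) : ∃ v, (G.neighborSet v).Subsingleton := by
  obtain ⟨u, v, p, hp, hlongest⟩ := Walk.exists_isPath_forall_isPath_length_le_length G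
  have hsnd : ∀ w, G.Adj u w → w = p.snd := fun w hw =>
    hG.eq_snd_of_adj_start hp hw <| by
      by_contra hnot
      simpa using hlongest _ _ (p.cons hw.symm) (hp.cons hnot)
  exact ⟨u, fun w hw w' hw' => (hsnd w hw).trans (hsnd w' hw').symm⟩

end SimpleGraph

namespace DeductionGame

open scoped Classical
open SimpleGraph

variable {V : Type*} (G : SimpleGraph V) (S : Finset V)

noncomputable def degIn (v : V) : ℕ := #(S.filter (G.Adj v))

lemma ncard_adj_eq_degIn (v : V) : {u ∈ (S : Set V) | G.Adj v u}.ncard = degIn G S v := by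
  rw [degIn, ← Set.ncard_coe_finset, coe_filter]
  rfl

lemma ncard_induce_adj_eq_degIn (v : (S : Set V)) :
    {u | (G.induce (S : Set V)).Adj v u}.ncard = degIn G S v := by
  rw [← ncard_adj_eq_degIn, ← Set.ncard_image_of_injective _ Subtype.val_injective]
  congr 1
  ext u
  simp only [Set.mem_image, Set.mem_ofPred_eq, induce_adj]
  exact ⟨fun ⟨x, hx, hxu⟩ => hxu ▸ ⟨x.2, hx⟩, fun ⟨hu, hadj⟩ => ⟨⟨u, hu⟩, hadj, rfl⟩⟩

lemma mem_pruneRemoved [Fintype V] {v : V} :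
    v ∈ pruneRemoved G S ↔ v ∈ S ∧ (degIn G S v ≤ 1 ∨ ∃ u ∈ S, G.Adj v u ∧ degIn G S u = 1) := by
  simp only [pruneRemoved, mem_filter, ncard_adj_eq_degIn]

lemma eq_of_degIn_eq_one {v u w : V} (hv : degIn G S v = 1) (hu : u ∈ S) (hvu : G.Adj v u)
    (hw : w ∈ S) (hvw : G.Adj v w) : u = w :=
  card_le_one.mp hv.le u (mem_filter.mpr ⟨hu, hvu⟩) w (mem_filter.mpr ⟨hw, hvw⟩)

lemma exists_degIn_le_one [Finite V] (hG : G.IsAcyclic) (hS : S.Nonempty) :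
    ∃ v ∈ S, degIn G S v ≤ 1 := by
  have : Nonempty (S : Set V) := hS.coe_sort
  obtain ⟨v, hv⟩ := (hG.induce (S : Set V)).exists_subsingleton_neighborSet
  refine ⟨v, v.2, ?_⟩
  rw [← ncard_induce_adj_eq_degIn]
  exact (Set.ncard_le_one_iff_subsingleton).mpr hv

def NbrsProtected (P : Finset V) (v : V) : Prop := ∀ u ∈ S, G.Adj v u → u ∈ P

variable {G S} in
lemma NbrsProtected.mono {P Q : Finset V} {v : V} (h : NbrsProtected G S P v) (hPQ : P ⊆ Q) :
    NbrsProtected G S Q v :=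
  fun u hu hvu => hPQ (h u hu hvu)

abbrev Comp := (G.induce (S : Set V)).ConnectedComponent

noncomputable def compVerts (c : Comp G S) : Finset V :=
  S.filter fun v => ∃ h : v ∈ S, (G.induce (S : Set V)).connectedComponentMk ⟨v, h⟩ = c

variable {G S}

lemma mem_compVerts {c : Comp G S} {v : V} :
    v ∈ compVerts G S c ↔ ∃ h : v ∈ S, (G.induce (S : Set V)).connectedComponentMk ⟨v, h⟩ = c := by
  rw [compVerts, mem_filter, and_iff_right_of_imp fun ⟨h, _⟩ => h]

lemma compVerts_subset (c : Comp G S) : compVerts G S c ⊆ S := filter_subset _ _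

lemma mem_compVerts_mk {v : V} (hv : v ∈ S) :
    v ∈ compVerts G S ((G.induce (S : Set V)).connectedComponentMk ⟨v, hv⟩) :=
  mem_compVerts.mpr ⟨hv, rfl⟩

lemma eq_of_mem_compVerts {c c' : Comp G S} {v : V} (h : v ∈ compVerts G S c)
    (h' : v ∈ compVerts G S c') : c = c' := by
  obtain ⟨_, rfl⟩ := mem_compVerts.mp h
  obtain ⟨_, rfl⟩ := mem_compVerts.mp h'
  rfl

lemma compVerts_nonempty (c : Comp G S) : (compVerts G S c).Nonempty := by
  obtain ⟨v, rfl⟩ := c.exists_rep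
  exact ⟨v, mem_compVerts_mk v.2⟩

lemma mem_compVerts_of_adj {c : Comp G S} {v u : V} (hv : v ∈ compVerts G S c) (hu : u ∈ S)
    (hvu : G.Adj v u) : u ∈ compVerts G S c := by
  obtain ⟨hvS, rfl⟩ := mem_compVerts.mp hv
  exact mem_compVerts.mpr ⟨hu, ConnectedComponent.sound (Adj.reachable (G := G.induce _)
    (u := ⟨u, hu⟩) (v := ⟨v, hvS⟩) hvu.symm)⟩

lemma reachable_of_mem_compVerts {c : Comp G S} {v u : V} (hv : v ∈ compVerts G S c)
    (hu : u ∈ compVerts G S c) :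
    ∃ (hvS : v ∈ S) (huS : u ∈ S), (G.induce (S : Set V)).Reachable ⟨v, hvS⟩ ⟨u, huS⟩ := by
  obtain ⟨hvS, hcv⟩ := mem_compVerts.mp hv
  obtain ⟨huS, hcu⟩ := mem_compVerts.mp hu
  exact ⟨hvS, huS, ConnectedComponent.exact (hcv.trans hcu.symm)⟩

lemma compVerts_subset_of_closed {c : Comp G S} {T : Finset V}
    (hT : ∀ a ∈ T, ∀ b ∈ S, G.Adj a b → b ∈ T) {w : V} (hw : w ∈ compVerts G S c) (hwT : w ∈ T) :
    compVerts G S c ⊆ T := by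
  intro x hx
  obtain ⟨_, _, ⟨p⟩⟩ := reachable_of_mem_compVerts hw hx
  suffices ∀ (a b : (S : Set V)), (G.induce (S : Set V)).Walk a b → a.1 ∈ T → b.1 ∈ T from
    this _ _ p hwT
  intro a b q
  induction q with
  | nil => exact id
  | cons hadj _ ih => exact fun ha => ih (hT _ ha _ (Subtype.prop _) hadj)

lemma exists_adj_of_mem_compVerts {c : Comp G S} {v u : V} (hv : v ∈ compVerts G S c)
    (hu : u ∈ compVerts G S c) (hne : v ≠ u) : ∃ x ∈ S, G.Adj v x := by
  obtain ⟨_, _, ⟨p⟩⟩ := reachable_of_mem_compVerts hv hu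
  cases p with
  | nil => exact absurd rfl hne
  | cons hadj _ => exact ⟨_, Subtype.prop _, hadj⟩

lemma one_le_degIn {c : Comp G S} (hc : 2 ≤ #(compVerts G S c)) {v : V}
    (hv : v ∈ compVerts G S c) : 1 ≤ degIn G S v := by
  obtain ⟨u, hu, hne⟩ := exists_mem_ne hc v
  obtain ⟨x, hx, hvx⟩ := exists_adj_of_mem_compVerts hv hu hne.symm
  exact card_pos.mpr ⟨x, mem_filter.mpr ⟨hx, hvx⟩⟩

lemma degIn_le_one {c : Comp G S} (hc : #(compVerts G S c) ≤ 2) {v : V}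
    (hv : v ∈ compVerts G S c) : degIn G S v ≤ 1 := by
  have hsub : S.filter (G.Adj v) ⊆ (compVerts G S c).erase v := fun u hu => by
    obtain ⟨huS, hvu⟩ := mem_filter.mp hu
    exact mem_erase.mpr ⟨hvu.ne', mem_compVerts_of_adj hv huS hvu⟩
  have := card_le_card hsub
  rw [card_erase_of_mem hv] at this
  exact this.trans (by omega)

lemma adj_of_mem_compVerts {c : Comp G S} (hc : #(compVerts G S c) ≤ 2) {v u : V}
    (hv : v ∈ compVerts G S c) (hu : u ∈ compVerts G S c) (hne : v ≠ u) : G.Adj v u := by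
  obtain ⟨x, hx, hvx⟩ := exists_adj_of_mem_compVerts hv hu hne
  have hxc := mem_compVerts_of_adj hv hx hvx
  have : #{v, u, x} ≤ #(compVerts G S c) := card_le_card (by
    simp only [insert_subset_iff, singleton_subset_iff]; exact ⟨hv, hu, hxc⟩)
  by_contra hvu
  have hux : u ≠ x := fun h => hvu (h ▸ hvx)
  rw [card_insert_of_notMem (by simp [hne, hvx.ne]), card_pair hux] at this
  omega

lemma two_le_degIn_of_adj {c : Comp G S} (hc : 3 ≤ #(compVerts G S c)) {v w : V}
    (hv : v ∈ compVerts G S c) (hdeg : degIn G S v = 1) (hw : w ∈ S) (hvw : G.Adj v w) :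
    2 ≤ degIn G S w := by
  by_contra hlt
  have hwc := mem_compVerts_of_adj hv hw hvw
  have hdegw : degIn G S w = 1 := le_antisymm (by omega) (one_le_degIn (by omega) hwc)
  have hvS := compVerts_subset c hv
  have hclosed : ∀ a ∈ ({v, w} : Finset V), ∀ b ∈ S, G.Adj a b → b ∈ ({v, w} : Finset V) := by
    intro a ha b hb hab
    rcases mem_insert.mp ha with rfl | ha
    · simp [eq_of_degIn_eq_one G S hdeg hb hab hw hvw]
    · rw [mem_singleton.mp ha] at hab
      simp [eq_of_degIn_eq_one G S hdegw hb hab hvS hvw.symm]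
  have := card_le_card (compVerts_subset_of_closed hclosed hv (mem_insert_self v {w}))
  have := card_le_two (a := v) (b := w)
  omega

variable (G S) in
noncomputable def compLeaves (c : Comp G S) : Finset V :=
  (compVerts G S c).filter (degIn G S · = 1)

lemma ncard_supp_sep (c : Comp G S) (P : V → Prop) :
    {x ∈ c.supp | P x.1}.ncard = #((compVerts G S c).filter P) := by
  rw [← Set.ncard_image_of_injective _ Subtype.val_injective, ← Set.ncard_coe_finset]
  congr 1
  ext v
  simp only [Set.mem_image, Set.mem_ofPred_eq, ConnectedComponent.mem_supp_iff, coe_filter,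
    mem_compVerts]
  exact ⟨fun ⟨x, ⟨hx, hP⟩, hxv⟩ => hxv ▸ ⟨⟨x.2, hx⟩, hP⟩,
    fun ⟨⟨hv, hc⟩, hP⟩ => ⟨⟨v, hv⟩, ⟨hc, hP⟩, rfl⟩⟩

lemma sum_compVerts (f : V → ℕ) :
    ∑ c : Comp G S, ∑ v ∈ compVerts G S c, f v = ∑ v ∈ S, f v := by
  simp only [compVerts, sum_filter]
  rw [sum_comm]
  refine sum_congr rfl fun v hv => ?_
  simp [hv]

section PruneRound

variable [Fintype V]

lemma pruneStepCount_eq : pruneStepCount G S =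
    ∑ c : Comp G S, if #(compVerts G S c) ≤ 2 then 1 else #(compLeaves G S c) := by
  rw [pruneStepCount]
  refine sum_congr (congrArg (@univ _) (Subsingleton.elim _ _)) fun c _ => ?_
  have hcard := ncard_supp_sep c (fun _ => True)
  simp only [and_true, Set.ofPred_mem_eq, filter_true] at hcard
  simp only [ncard_induce_adj_eq_degIn, hcard, compLeaves]
  rw [ncard_supp_sep c (degIn G S · = 1)]
  convert rfl

variable (G S) in
noncomputable def compStems (c : Comp G S) : Finset V :=
  (compVerts G S c).filter fun w => ∃ x ∈ S, G.Adj w x ∧ degIn G S x = 1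

lemma compStems_subset_pruneRemoved (c : Comp G S) : compStems G S c ⊆ pruneRemoved G S :=
  fun _ hw => (mem_pruneRemoved G S).mpr
    ⟨compVerts_subset c (mem_filter.mp hw).1, Or.inr (mem_filter.mp hw).2⟩

variable [DecidableEq V]

lemma degIn_eq_one_of_mem_pruneRemoved {c : Comp G S} (hc : 3 ≤ #(compVerts G S c)) {v : V}
    (hv : v ∈ compVerts G S c \ compStems G S c) (hvR : v ∈ pruneRemoved G S) :
    degIn G S v = 1 := by
  obtain ⟨hvc, hvst⟩ := mem_sdiff.mp hv
  rcases ((mem_pruneRemoved G S).mp hvR).2 with hdeg | hstem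
  · exact le_antisymm hdeg (one_le_degIn (by omega) hvc)
  · exact absurd (mem_filter.mpr ⟨hvc, hstem⟩) hvst

lemma mem_compStems_of_adj {c : Comp G S} (hc : 3 ≤ #(compVerts G S c)) {v w : V}
    (hv : v ∈ compVerts G S c \ compStems G S c) (hw : w ∈ pruneRemoved G S)
    (hwv : G.Adj w v) : w ∈ compStems G S c := by
  obtain ⟨hvc, hvst⟩ := mem_sdiff.mp hv
  have hwS := ((mem_pruneRemoved G S).mp hw).1
  have hwc := mem_compVerts_of_adj hvc hwS hwv.symm
  by_contra hwst
  have hdeg := degIn_eq_one_of_mem_pruneRemoved hc (mem_sdiff.mpr ⟨hwc, hwst⟩) hw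
  exact hvst (mem_filter.mpr ⟨hvc, w, hwS, hwv.symm, hdeg⟩)

lemma compLeaves_eq {c : Comp G S} (hc : 3 ≤ #(compVerts G S c)) :
    compLeaves G S c = (compVerts G S c \ compStems G S c).filter (· ∈ pruneRemoved G S) := by
  ext v
  simp only [compLeaves, mem_filter, mem_sdiff]
  constructor
  · rintro ⟨hvc, hdeg⟩
    refine ⟨⟨hvc, fun hst => ?_⟩,
      (mem_pruneRemoved G S).mpr ⟨compVerts_subset c hvc, Or.inl hdeg.le⟩⟩
    obtain ⟨x, hx, hvx, hdegx⟩ := (mem_filter.mp hst).2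
    have := two_le_degIn_of_adj hc (mem_compVerts_of_adj hvc hx hvx) hdegx
      (compVerts_subset c hvc) hvx.symm
    omega
  · rintro ⟨hv, hvR⟩
    exact ⟨hv.1, degIn_eq_one_of_mem_pruneRemoved hc (mem_sdiff.mpr hv) hvR⟩

end PruneRound

section Game

variable [DecidableEq V] (G S) (L : V → ℕ)

/- The game of `dedStep`, played on the subgraph induced by `S`; a layout's values outside `S`
play no role. -/

noncomputable def unprotectedNbrs (P : Finset V) (v : V) : Finset V :=
  S.filter fun u => G.Adj v u ∧ u ∉ P

noncomputable def fires (s : Finset V × Finset V) : Finset V :=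
  S.filter fun v => 0 < L v ∧ v ∉ s.2 ∧ #(unprotectedNbrs G S s.1 v) ≤ L v

noncomputable def step (s : Finset V × Finset V) : Finset V × Finset V :=
  (s.1 ∪ (fires G S L s).biUnion (unprotectedNbrs G S s.1), s.2 ∪ fires G S L s)

noncomputable def start : Finset V × Finset V := (S.filter (0 < L ·), ∅)

noncomputable def run (k : ℕ) : Finset V × Finset V := (step G S L)^[k] (start S L)

def Succeeds : Prop := ∃ k, S ⊆ (run G S L k).1

noncomputable def deductionNumberOn : ℕ :=
  sInf {n | ∃ L : V → ℕ, ∑ v ∈ S, L v = n ∧ Succeeds G S L}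

def FiredSaturated (s : Finset V × Finset V) : Prop := ∀ v ∈ s.2, NbrsProtected G S s.1 v

def Sends (w u : V) : Prop :=
  ∃ t, w ∈ fires G S L (run G S L t) ∧ u ∈ unprotectedNbrs G S (run G S L t).1 w

variable {G S L}

lemma mem_unprotectedNbrs {P : Finset V} {v u : V} :
    u ∈ unprotectedNbrs G S P v ↔ u ∈ S ∧ G.Adj v u ∧ u ∉ P :=
  mem_filter

lemma mem_fires {s : Finset V × Finset V} {v : V} :
    v ∈ fires G S L s ↔ v ∈ S ∧ 0 < L v ∧ v ∉ s.2 ∧ #(unprotectedNbrs G S s.1 v) ≤ L v :=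
  mem_filter

lemma fst_subset_fst_step (s : Finset V × Finset V) : s.1 ⊆ (step G S L s).1 :=
  subset_union_left

lemma mem_fst_step {s : Finset V × Finset V} {u : V} :
    u ∈ (step G S L s).1 ↔ u ∈ s.1 ∨ ∃ w ∈ fires G S L s, u ∈ unprotectedNbrs G S s.1 w := by
  simp only [step, mem_union, mem_biUnion]

lemma mem_snd_step {s : Finset V × Finset V} {v : V} :
    v ∈ (step G S L s).2 ↔ v ∈ s.2 ∨ v ∈ fires G S L s :=
  mem_union

lemma nbrsProtected_step_of_mem_fires {s : Finset V × Finset V} {w : V}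
    (hw : w ∈ fires G S L s) : NbrsProtected G S (step G S L s).1 w := by
  intro u huS hwu
  by_cases hu : u ∈ s.1
  · exact fst_subset_fst_step s hu
  · exact mem_fst_step.mpr (Or.inr ⟨w, hw, mem_unprotectedNbrs.mpr ⟨huS, hwu, hu⟩⟩)

lemma FiredSaturated.step {s : Finset V × Finset V} (h : FiredSaturated G S s) :
    FiredSaturated G S (step G S L s) := by
  intro v hv
  rcases mem_snd_step.mp hv with hv | hv
  · exact (h v hv).mono (fst_subset_fst_step s)
  · exact nbrsProtected_step_of_mem_fires hv

lemma run_succ (k : ℕ) : run G S L (k + 1) = step G S L (run G S L k) :=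
  Function.iterate_succ_apply' _ _ _

lemma firedSaturated_run (k : ℕ) : FiredSaturated G S (run G S L k) := by
  induction k with
  | zero => simp [FiredSaturated, run, start]
  | succ k ih => rw [run_succ]; exact ih.step

lemma monotone_fst_run : Monotone fun k => (run G S L k).1 :=
  monotone_nat_of_le_succ fun k => by rw [run_succ]; exact fst_subset_fst_step _

lemma monotone_snd_run : Monotone fun k => (run G S L k).2 :=
  monotone_nat_of_le_succ fun k => by rw [run_succ]; exact subset_union_left

lemma mem_fst_run_zero {v : V} : v ∈ (run G S L 0).1 ↔ v ∈ S ∧ 0 < L v :=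
  mem_filter

lemma mem_snd_run_succ_of_mem_fires {t : ℕ} {w : V} (h : w ∈ fires G S L (run G S L t)) :
    w ∈ (run G S L (t + 1)).2 := by
  rw [run_succ]
  exact mem_snd_step.mpr (Or.inr h)

lemma eq_of_mem_fires_run {t t' : ℕ} {w : V} (h : w ∈ fires G S L (run G S L t))
    (h' : w ∈ fires G S L (run G S L t')) : t = t' := by
  by_contra hne
  wlog hlt : t < t' generalizing t t'
  · exact this h' h (Ne.symm hne) (by omega)
  exact (mem_fires.mp h').2.2.1 (monotone_snd_run hlt (mem_snd_run_succ_of_mem_fires h))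

section Sends

variable {w u : V}

lemma Sends.mem_left (h : Sends G S L w u) : w ∈ S :=
  let ⟨_, hw, _⟩ := h; (mem_fires.mp hw).1

lemma Sends.pos (h : Sends G S L w u) : 0 < L w :=
  let ⟨_, hw, _⟩ := h; (mem_fires.mp hw).2.1

lemma Sends.adj (h : Sends G S L w u) : G.Adj w u :=
  let ⟨_, _, hu⟩ := h; (mem_unprotectedNbrs.mp hu).2.1

lemma exists_sends_of_mem_fst_run {k : ℕ} (hu : u ∈ (run G S L k).1) (hL : L u = 0) :
    ∃ w, Sends G S L w u := by
  induction k with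
  | zero => exact absurd (mem_fst_run_zero.mp hu).2 (by omega)
  | succ k ih =>
    rw [run_succ] at hu
    rcases mem_fst_step.mp hu with hu | ⟨w, hw, huw⟩
    · exact ih hu
    · exact ⟨w, k, hw, huw⟩

lemma card_filter_sends_le (w : V) : #(S.filter (Sends G S L w)) ≤ L w := by
  by_cases hfires : ∃ t, w ∈ fires G S L (run G S L t)
  · obtain ⟨t, ht⟩ := hfires
    calc #(S.filter (Sends G S L w)) ≤ #(unprotectedNbrs G S (run G S L t).1 w) :=
          card_le_card fun u hu => by
            obtain ⟨t', ht', hu⟩ := (mem_filter.mp hu).2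
            rwa [eq_of_mem_fires_run ht ht']
      _ ≤ L w := (mem_fires.mp ht).2.2.2
  · rw [filter_false_of_mem fun u _ ⟨t, ht, _⟩ => hfires ⟨t, ht⟩, card_empty]
    exact Nat.zero_le _

lemma sum_card_filter_sends_le (T Y : Finset V) (hY : Y ⊆ S) :
    ∑ v ∈ Y, #(T.filter (Sends G S L · v)) ≤ ∑ w ∈ T, L w := by
  calc ∑ v ∈ Y, #(T.filter (Sends G S L · v))
      = ∑ w ∈ T, #(Y.filter (Sends G S L w)) := by
        simp only [card_filter]
        exact sum_comm
    _ ≤ ∑ w ∈ T, L w := sum_le_sum fun w _ =>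
        (card_le_card (filter_subset_filter _ hY)).trans (card_filter_sends_le w)

lemma exists_pos_of_succeeds (h : Succeeds G S L) (c : Comp G S) :
    ∃ v ∈ compVerts G S c, 0 < L v := by
  by_contra! hzero
  obtain ⟨k, hk⟩ := h
  obtain ⟨v, hv⟩ := compVerts_nonempty c
  obtain ⟨w, hwv⟩ :=
    exists_sends_of_mem_fst_run (hk (compVerts_subset c hv)) (by simpa using hzero v hv)
  have := hzero w (mem_compVerts_of_adj hv hwv.mem_left hwv.adj.symm)
  have := hwv.pos
  omega

end Sends

section Simulation

variable {S₁ S₂ : Finset V} {L₁ L₂ : V → ℕ}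

lemma nbrsProtected_step_of_mem_fires_of_le {s₁ s₂ : Finset V × Finset V} {w : V}
    (hsat : FiredSaturated G S₂ s₂) (hw : w ∈ fires G S₁ L₁ s₁) (hw₂ : w ∈ S₂)
    (hle : L₁ w ≤ L₂ w) (hsub : unprotectedNbrs G S₂ s₂.1 w ⊆ unprotectedNbrs G S₁ s₁.1 w) :
    NbrsProtected G S₂ (step G S₂ L₂ s₂).1 w := by
  obtain ⟨-, hpos, -, hcard⟩ := mem_fires.mp hw
  by_cases hdone : NbrsProtected G S₂ s₂.1 w
  · exact hdone.mono (fst_subset_fst_step s₂)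
  refine nbrsProtected_step_of_mem_fires (mem_fires.mpr ⟨hw₂, hpos.trans_le hle,
    fun hfired => hdone (hsat w hfired), ?_⟩)
  exact (card_le_card hsub).trans (hcard.trans hle)

variable (G S₂) in
def Dominates (s₁ s₂ : Finset V × Finset V) : Prop :=
  s₁.1 ∩ S₂ ⊆ s₂.1 ∧ ∀ v ∈ s₁.2 ∩ S₂, NbrsProtected G S₂ s₂.1 v

lemma dominates_step {s₁ s₂ : Finset V × Finset V} (h : Dominates G S₂ s₁ s₂)
    (hsat : FiredSaturated G S₂ s₂) (hle : ∀ v ∈ S₁ ∩ S₂, L₁ v ≤ L₂ v)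
    (hboundary : ∀ v ∈ S₁ ∩ S₂, ∀ u ∈ S₂ \ S₁, G.Adj v u → u ∈ s₂.1)
    (hcross : ∀ w ∈ fires G S₁ L₁ s₁, w ∉ S₂ →
      ∀ u ∈ unprotectedNbrs G S₁ s₁.1 w, u ∈ S₂ → u ∈ s₂.1) :
    Dominates G S₂ (step G S₁ L₁ s₁) (step G S₂ L₂ s₂) := by
  obtain ⟨hP, hF⟩ := h
  have hdone : ∀ w ∈ fires G S₁ L₁ s₁, w ∈ S₂ → NbrsProtected G S₂ (step G S₂ L₂ s₂).1 w := by
    intro w hw hw₂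
    have hw₁₂ : w ∈ S₁ ∩ S₂ := mem_inter.mpr ⟨(mem_fires.mp hw).1, hw₂⟩
    refine nbrsProtected_step_of_mem_fires_of_le hsat hw hw₂ (hle w hw₁₂) fun u hu => ?_
    obtain ⟨hu₂, hwu, hus₂⟩ := mem_unprotectedNbrs.mp hu
    have hu₁ : u ∈ S₁ := by_contra fun hu₁ =>
      hus₂ (hboundary w hw₁₂ u (mem_sdiff.mpr ⟨hu₂, hu₁⟩) hwu)
    exact mem_unprotectedNbrs.mpr ⟨hu₁, hwu, fun hus₁ => hus₂ (hP (mem_inter.mpr ⟨hus₁, hu₂⟩))⟩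
  constructor
  · intro u hu
    obtain ⟨hu₁, hu₂⟩ := mem_inter.mp hu
    rcases mem_fst_step.mp hu₁ with hu₁ | ⟨w, hw, huw⟩
    · exact fst_subset_fst_step _ (hP (mem_inter.mpr ⟨hu₁, hu₂⟩))
    by_cases hw₂ : w ∈ S₂
    · exact hdone w hw hw₂ u hu₂ (mem_unprotectedNbrs.mp huw).2.1
    · exact fst_subset_fst_step _ (hcross w hw hw₂ u huw hu₂)
  · intro v hv
    obtain ⟨hv₁, hv₂⟩ := mem_inter.mp hv
    rcases mem_snd_step.mp hv₁ with hv₁ | hv₁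
    · exact (hF v (mem_inter.mpr ⟨hv₁, hv₂⟩)).mono (fst_subset_fst_step _)
    · exact hdone v hv₁ hv₂

/- The invariant `Dominates` also tracks fired vertices: a vertex of `S₂` that fires in the first
game fires in the second game at the same stage, unless its `S₂`-neighbours are already protected
there. -/
theorem fst_run_inter_subset (m : ℕ) (hle : ∀ v ∈ S₁ ∩ S₂, L₁ v ≤ L₂ v)
    (hstart : ∀ v ∈ S₁ ∩ S₂, 0 < L₁ v → v ∈ (run G S₂ L₂ m).1)
    (hboundary : ∀ v ∈ S₁ ∩ S₂, ∀ u ∈ S₂ \ S₁, G.Adj v u → u ∈ (run G S₂ L₂ m).1)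
    (hsends : ∀ w ∉ S₂, ∀ u ∈ S₂, Sends G S₁ L₁ w u → u ∈ (run G S₂ L₂ m).1) (k : ℕ) :
    (run G S₁ L₁ k).1 ∩ S₂ ⊆ (run G S₂ L₂ (k + m)).1 := by
  have hmono : ∀ k, (run G S₂ L₂ m).1 ⊆ (run G S₂ L₂ (k + m)).1 :=
    fun k => monotone_fst_run (by omega)
  suffices Dominates G S₂ (run G S₁ L₁ k) (run G S₂ L₂ (k + m)) from this.1
  induction k with
  | zero =>
    refine ⟨fun v hv => ?_, by simp [run, start]⟩
    obtain ⟨hv₁, hv₂⟩ := mem_inter.mp hv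
    obtain ⟨hvS, hpos⟩ := mem_fst_run_zero.mp hv₁
    exact hmono 0 (hstart v (mem_inter.mpr ⟨hvS, hv₂⟩) hpos)
  | succ k ih =>
    rw [run_succ, Nat.add_right_comm, run_succ]
    exact dominates_step ih (firedSaturated_run _) hle
      (fun v hv u hu hvu => hmono k (hboundary v hv u hu hvu))
      (fun w hw hw₂ u huw hu₂ => hmono k (hsends w hw₂ u hu₂ ⟨k, hw, huw⟩))

end Simulation

lemma nbrsProtected_run_one {v : V} (hv : v ∈ S) (hpos : 0 < L v) (hdeg : degIn G S v ≤ L v) :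
    NbrsProtected G S (run G S L 1).1 v := by
  refine nbrsProtected_step_of_mem_fires (mem_fires.mpr ⟨hv, hpos, notMem_empty v, ?_⟩)
  exact (card_le_card (monotone_filter_right _ fun _ _ h => h.1)).trans hdeg

end Game

section UpperBound

variable (G S)

noncomputable def pick (c : Comp G S) : V := (compVerts_nonempty c).choose

noncomputable def placedIn (c : Comp G S) : Finset V :=
  if #(compVerts G S c) ≤ 2 then {pick G S c} else compLeaves G S c

variable {G S}

lemma pick_mem (c : Comp G S) : pick G S c ∈ compVerts G S c := (compVerts_nonempty c).choose_spec

lemma placedIn_subset (c : Comp G S) : placedIn G S c ⊆ compVerts G S c := by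
  unfold placedIn
  split_ifs
  · exact singleton_subset_iff.mpr (pick_mem c)
  · exact filter_subset _ _

variable [DecidableEq V]

variable (G S) in
noncomputable def placed : Finset V := univ.biUnion (placedIn G S)

lemma placed_subset : placed G S ⊆ S := fun _ hv =>
  let ⟨c, _, hvc⟩ := mem_biUnion.mp hv; compVerts_subset c (placedIn_subset c hvc)

lemma degIn_le_one_of_mem_placed {v : V} (hv : v ∈ placed G S) : degIn G S v ≤ 1 := by
  obtain ⟨c, -, hvc⟩ := mem_biUnion.mp hv
  have hvc' := placedIn_subset c hvc
  unfold placedIn at hvc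
  split_ifs at hvc with hc
  · exact degIn_le_one hc hvc'
  · exact (mem_filter.mp hvc).2.le

lemma pick_mem_placed {c : Comp G S} (hc : #(compVerts G S c) ≤ 2) : pick G S c ∈ placed G S :=
  mem_biUnion.mpr ⟨c, mem_univ c, by simp [placedIn, hc]⟩

lemma mem_placed_of_degIn_eq_one {c : Comp G S} (hc : ¬#(compVerts G S c) ≤ 2) {v : V}
    (hv : v ∈ compVerts G S c) (hdeg : degIn G S v = 1) : v ∈ placed G S :=
  mem_biUnion.mpr ⟨c, mem_univ c, by simpa [placedIn, hc, compLeaves] using ⟨hv, hdeg⟩⟩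

variable [Fintype V]

variable (G S) in
noncomputable def liftLayout (L : V → ℕ) (v : V) : ℕ :=
  (if v ∈ S \ pruneRemoved G S then L v else 0) + if v ∈ placed G S then 1 else 0

lemma card_placed : #(placed G S) = pruneStepCount G S := by
  rw [placed, card_biUnion fun c _ c' _ hne => disjoint_left.mpr fun v hv hv' =>
    hne (eq_of_mem_compVerts (placedIn_subset c hv) (placedIn_subset c' hv')), pruneStepCount_eq]
  refine sum_congr (by congr!) fun c _ => ?_
  unfold placedIn
  split_ifs <;> simp [compLeaves]

lemma pruneRemoved_subset_fst_run_one {L : V → ℕ} (hL : ∀ v ∈ placed G S, 0 < L v) :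
    pruneRemoved G S ⊆ (run G S L 1).1 := by
  have hplaced : ∀ v ∈ placed G S, v ∈ (run G S L 1).1 ∧ NbrsProtected G S (run G S L 1).1 v :=
    fun v hv => ⟨monotone_fst_run zero_le_one (mem_fst_run_zero.mpr ⟨placed_subset hv, hL v hv⟩),
      nbrsProtected_run_one (placed_subset hv) (hL v hv)
        ((degIn_le_one_of_mem_placed hv).trans (hL v hv))⟩
  intro u hu
  obtain ⟨huS, hrem⟩ := (mem_pruneRemoved G S).mp hu
  set c : Comp G S := (G.induce (S : Set V)).connectedComponentMk ⟨u, huS⟩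
  have huc : u ∈ compVerts G S c := mem_compVerts_mk huS
  by_cases hc : #(compVerts G S c) ≤ 2
  · have hpick := hplaced _ (pick_mem_placed hc)
    by_cases hup : pick G S c = u
    · exact hup ▸ hpick.1
    · exact hpick.2 u huS (adj_of_mem_compVerts hc (pick_mem c) huc hup)
  rcases hrem with hdeg | ⟨x, hx, hux, hdegx⟩
  · exact (hplaced u (mem_placed_of_degIn_eq_one hc huc
      (le_antisymm hdeg (one_le_degIn (by omega) huc)))).1
  · exact (hplaced x (mem_placed_of_degIn_eq_one hc (mem_compVerts_of_adj huc hx hux) hdegx)).2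
      u huS hux.symm

lemma sum_liftLayout (L : V → ℕ) :
    ∑ v ∈ S, liftLayout G S L v = ∑ v ∈ S \ pruneRemoved G S, L v + pruneStepCount G S := by
  simp only [liftLayout, sum_add_distrib, sum_ite_mem, inter_eq_right.mpr sdiff_subset,
    inter_eq_right.mpr placed_subset, sum_const, smul_eq_mul, mul_one, card_placed]

lemma succeeds_liftLayout {L : V → ℕ} (h : Succeeds G (S \ pruneRemoved G S) L) :
    Succeeds G S (liftLayout G S L) := by
  obtain ⟨k, hk⟩ := h
  have hremoved : pruneRemoved G S ⊆ (run G S (liftLayout G S L) 1).1 :=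
    pruneRemoved_subset_fst_run_one fun v hv => by simp [liftLayout, hv]
  have hsim := fst_run_inter_subset (G := G) (S₁ := S \ pruneRemoved G S) (S₂ := S) (L₁ := L)
    (L₂ := liftLayout G S L) 1 (fun v hv => by simp [liftLayout, (mem_inter.mp hv).1])
    (fun v hv hpos => monotone_fst_run zero_le_one (mem_fst_run_zero.mpr
      ⟨(mem_inter.mp hv).2, by simp [liftLayout, (mem_inter.mp hv).1, hpos]⟩))
    (fun _ _ u hu _ => hremoved (by simpa using hu : u ∈ S ∧ u ∈ pruneRemoved G S).2)
    (fun _ hw _ _ hwu => absurd (sdiff_subset hwu.mem_left) hw) k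
  refine ⟨k + 1, fun v hv => ?_⟩
  by_cases hvR : v ∈ pruneRemoved G S
  · exact monotone_fst_run (by omega) (hremoved hvR)
  · exact hsim (mem_inter.mpr ⟨hk (mem_sdiff.mpr ⟨hv, hvR⟩), hv⟩)

end UpperBound

section LowerBound

variable [Fintype V] [DecidableEq V] {L : V → ℕ}

variable (G S L) in
noncomputable def received (u : V) : ℕ := #((pruneRemoved G S).filter (Sends G S L · u))

variable (G S L) in
noncomputable def restrictLayout (v : V) : ℕ :=
  if v ∈ S \ pruneRemoved G S then L v + received G S L v else 0

lemma restrictLayout_eq_zero {v : V} (hv : v ∉ S \ pruneRemoved G S) :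
    restrictLayout G S L v = 0 :=
  if_neg hv

lemma succeeds_restrictLayout (h : Succeeds G S L) :
    Succeeds G (S \ pruneRemoved G S) (restrictLayout G S L) := by
  obtain ⟨k, hk⟩ := h
  have hsends : ∀ w ∉ S \ pruneRemoved G S, ∀ u, Sends G S L w u → 0 < received G S L u :=
    fun w hw _ hwu => card_pos.mpr ⟨w, mem_filter.mpr ⟨by simpa [hwu.mem_left] using hw, hwu⟩⟩
  have hsim := fst_run_inter_subset (G := G) (S₁ := S) (S₂ := S \ pruneRemoved G S) (L₁ := L)
    (L₂ := restrictLayout G S L) 0 (fun v hv => by simp [restrictLayout, (mem_inter.mp hv).2])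
    (fun v hv hpos => mem_fst_run_zero.mpr
      ⟨(mem_inter.mp hv).2, by simp [restrictLayout, (mem_inter.mp hv).2, hpos]⟩)
    (fun _ _ u hu _ => absurd (sdiff_subset (mem_sdiff.mp hu).1) (mem_sdiff.mp hu).2)
    (fun w hw u hu hwu => mem_fst_run_zero.mpr
      ⟨hu, by simp [restrictLayout, hu, hsends w hw u hwu]⟩) k
  exact ⟨k, fun v hv => hsim (mem_inter.mpr ⟨hk (sdiff_subset hv), hv⟩)⟩

lemma one_le_add_received (h : Succeeds G S L) {v : V} (hv : v ∈ S) (hdeg : degIn G S v = 1) :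
    1 ≤ L v + received G S L v := by
  by_cases hL : L v = 0
  · obtain ⟨k, hk⟩ := h
    obtain ⟨w, hwv⟩ := exists_sends_of_mem_fst_run (hk hv) hL
    have hwR : w ∈ pruneRemoved G S :=
      (mem_pruneRemoved G S).mpr ⟨hwv.mem_left, Or.inr ⟨v, hv, hwv.adj, hdeg⟩⟩
    exact le_add_left (card_pos.mpr ⟨w, mem_filter.mpr ⟨hwR, hwv⟩⟩)
  · omega

lemma received_le_card_filter_compStems {c : Comp G S} (hc : 3 ≤ #(compVerts G S c)) {v : V}
    (hv : v ∈ compVerts G S c \ compStems G S c) :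
    received G S L v ≤ #((compStems G S c).filter (Sends G S L · v)) :=
  card_le_card fun _ hw => mem_filter.mpr
    ⟨mem_compStems_of_adj hc hv (mem_filter.mp hw).1 (mem_filter.mp hw).2.adj, (mem_filter.mp hw).2⟩

lemma ite_add_restrictLayout_le (h : Succeeds G S L) {c : Comp G S}
    (hc : 3 ≤ #(compVerts G S c)) {v : V} (hv : v ∈ compVerts G S c \ compStems G S c) :
    (if v ∈ pruneRemoved G S then 1 else 0) + restrictLayout G S L v ≤
      L v + #((compStems G S c).filter (Sends G S L · v)) := by
  have hvS := compVerts_subset c (mem_sdiff.mp hv).1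
  have hrec := received_le_card_filter_compStems (L := L) hc hv
  by_cases hvR : v ∈ pruneRemoved G S
  · have := one_le_add_received h hvS (degIn_eq_one_of_mem_pruneRemoved hc hv hvR)
    simp only [restrictLayout, hvR, mem_sdiff, not_true, and_false, if_true, if_false]
    omega
  · simp only [restrictLayout, hvR, mem_sdiff, hvS, not_false_eq_true, and_self, if_true, if_false]
    omega

lemma card_compLeaves_add_sum_le (h : Succeeds G S L) {c : Comp G S}
    (hc : 3 ≤ #(compVerts G S c)) :
    #(compLeaves G S c) + ∑ v ∈ compVerts G S c, restrictLayout G S L v ≤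
      ∑ v ∈ compVerts G S c, L v := by
  set stems := compStems G S c
  set Y := compVerts G S c \ stems
  have hsplit : ∀ f : V → ℕ, ∑ v ∈ compVerts G S c, f v = ∑ v ∈ Y, f v + ∑ v ∈ stems, f v :=
    fun f => (sum_sdiff (filter_subset _ _)).symm
  have hstems : ∑ v ∈ stems, restrictLayout G S L v = 0 := sum_eq_zero fun v hv =>
    restrictLayout_eq_zero fun hv' => (mem_sdiff.mp hv').2 (compStems_subset_pruneRemoved c hv)
  calc #(compLeaves G S c) + ∑ v ∈ compVerts G S c, restrictLayout G S L v
      = ∑ v ∈ Y, ((if v ∈ pruneRemoved G S then 1 else 0) + restrictLayout G S L v) := by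
        rw [compLeaves_eq hc, card_filter, hsplit, hstems, add_zero, sum_add_distrib]
    _ ≤ ∑ v ∈ Y, L v + ∑ v ∈ Y, #(stems.filter (Sends G S L · v)) := by
        rw [← sum_add_distrib]
        exact sum_le_sum fun v hv => ite_add_restrictLayout_le h hc hv
    _ ≤ ∑ v ∈ compVerts G S c, L v := by
        rw [hsplit L]
        exact Nat.add_le_add_left
          (sum_card_filter_sends_le stems Y (sdiff_subset.trans (compVerts_subset c))) _

lemma one_add_sum_le_of_card_le_two (h : Succeeds G S L) {c : Comp G S}
    (hc : #(compVerts G S c) ≤ 2) :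
    1 + ∑ v ∈ compVerts G S c, restrictLayout G S L v ≤ ∑ v ∈ compVerts G S c, L v := by
  rw [sum_eq_zero fun v hv => restrictLayout_eq_zero fun hv' => (mem_sdiff.mp hv').2
    ((mem_pruneRemoved G S).mpr ⟨compVerts_subset c hv, Or.inl (degIn_le_one hc hv)⟩), add_zero]
  obtain ⟨v, hv, hpos⟩ := exists_pos_of_succeeds h c
  exact hpos.trans_le (single_le_sum (fun _ _ => Nat.zero_le _) hv)

lemma pruneStepCount_add_sum_restrictLayout_le (h : Succeeds G S L) :
    pruneStepCount G S + ∑ v ∈ S \ pruneRemoved G S, restrictLayout G S L v ≤ ∑ v ∈ S, L v := by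
  rw [sum_subset sdiff_subset fun v _ hv => restrictLayout_eq_zero hv, ← sum_compVerts (G := G),
    ← sum_compVerts (G := G) L, pruneStepCount_eq, ← sum_add_distrib]
  refine sum_le_sum fun c _ => ?_
  split_ifs with hc
  · exact one_add_sum_le_of_card_le_two h hc
  · exact card_compLeaves_add_sum_le h (by omega)

end LowerBound

section Main

variable [DecidableEq V]

lemma deductionNumberOn_le {L : V → ℕ} (h : Succeeds G S L) :
    deductionNumberOn G S ≤ ∑ v ∈ S, L v :=
  Nat.sInf_le ⟨L, rfl, h⟩

variable (G S) in
lemma exists_sum_eq_deductionNumberOn :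
    ∃ L : V → ℕ, ∑ v ∈ S, L v = deductionNumberOn G S ∧ Succeeds G S L :=
  Nat.sInf_mem (s := {n | ∃ L : V → ℕ, ∑ v ∈ S, L v = n ∧ Succeeds G S L})
    ⟨_, fun _ => 1, rfl, 0, fun _ hv => mem_fst_run_zero.mpr ⟨hv, Nat.one_pos⟩⟩

lemma deductionNumberOn_empty : deductionNumberOn G ∅ = 0 :=
  Nat.eq_zero_of_le_zero (deductionNumberOn_le (L := 0) ⟨0, empty_subset _⟩)

variable [Fintype V]

theorem deductionNumberOn_eq_pruneStepCount_add :
    deductionNumberOn G S = pruneStepCount G S + deductionNumberOn G (S \ pruneRemoved G S) := by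
  apply le_antisymm
  · obtain ⟨L, hsum, hL⟩ := exists_sum_eq_deductionNumberOn G (S \ pruneRemoved G S)
    calc deductionNumberOn G S ≤ ∑ v ∈ S, liftLayout G S L v :=
          deductionNumberOn_le (succeeds_liftLayout hL)
      _ = _ := by rw [sum_liftLayout, hsum, add_comm]
  · obtain ⟨L, hsum, hL⟩ := exists_sum_eq_deductionNumberOn G S
    calc pruneStepCount G S + deductionNumberOn G (S \ pruneRemoved G S)
        ≤ pruneStepCount G S + ∑ v ∈ S \ pruneRemoved G S, restrictLayout G S L v :=
          Nat.add_le_add_left (deductionNumberOn_le (succeeds_restrictLayout hL)) _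
      _ ≤ ∑ v ∈ S, L v := pruneStepCount_add_sum_restrictLayout_le hL
      _ = deductionNumberOn G S := hsum

lemma card_sdiff_pruneRemoved_lt (hG : G.IsAcyclic) (hS : S.Nonempty) :
    #(S \ pruneRemoved G S) < #S := by
  obtain ⟨v, hv, hdeg⟩ := exists_degIn_le_one G S hG hS
  exact card_lt_card (sdiff_ssubset (filter_subset _ _)
    ⟨v, (mem_pruneRemoved G S).mpr ⟨hv, Or.inl hdeg⟩⟩)

theorem pruneRun_eq_deductionNumberOn (hG : G.IsAcyclic) {n : ℕ} (hS : #S ≤ n) :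
    pruneRun G n S = deductionNumberOn G S := by
  induction n generalizing S with
  | zero => rw [card_eq_zero.mp (Nat.le_zero.mp hS), pruneRun, deductionNumberOn_empty]
  | succ n ih =>
    rw [pruneRun]
    split_ifs with hS₀
    · rw [hS₀, deductionNumberOn_empty]
    · have := card_sdiff_pruneRemoved_lt hG (nonempty_iff_ne_empty.mpr hS₀)
      rw [deductionNumberOn_eq_pruneStepCount_add, ih (S := S \ pruneRemoved G S) (by omega)]

lemma dedStep_eq_step [DecidableRel G.Adj] (L : V → ℕ) : dedStep G L = step G univ L := by
  funext s
  unfold dedStep step fires unprotectedNbrs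
  congr! 20

lemma dedSuccessful_iff_succeeds [DecidableRel G.Adj] (L : V → ℕ) :
    DedSuccessful G L ↔ Succeeds G univ L := by
  simp only [DedSuccessful, Succeeds, run, start, dedStep_eq_step, univ_subset_iff]

theorem deductionNumber_eq_deductionNumberOn_univ :
    deductionNumber G = deductionNumberOn G univ := by
  simp only [deductionNumber, deductionNumberOn, dedSuccessful_iff_succeeds]
  -- the two sides differ only in their `DecidableEq V` instances
  convert rfl

end Main

end DeductionGame

theorem pruning_eq_deduction {V : Type*} [Fintype V] [DecidableEq V] (G : SimpleGraph V)
    (hT : G.IsTree) : pruningNumber G = deductionNumber G := by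
  rw [pruningNumber, DeductionGame.deductionNumber_eq_deductionNumberOn_univ,
    DeductionGame.pruneRun_eq_deductionNumberOn hT.isAcyclic card_univ.le]
end
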